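/- Let S be a closed subspace of L²(ℝ) that is invariant under integer translations. Then the set M = {θ ∈ ℝ : T_θ f ∈ S for all f ∈ S} is a closed additive subgroup of ℝ containing ℤ. -/

import Mathlib

/-!
The invariance set is an additive submonoid of `ℝ` because `T_{a+b} = T_a T_b`, and it is closed
because `θ ↦ T_θ f` is continuous in `L²`. Since it contains `ℤ`, it is the full preimage of a
closed submonoid of the compact group `ℝ/ℤ`; in a compact group the closure of the submonoid
generated by `x` contains `-x`, so the submonoid is a group.
-/

open MeasureTheory

noncomputable section

/-- The space `L²(ℝ)` of complex-valued square-integrable functions. -/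
abbrev L2 := Lp ℂ 2 (volume : Measure ℝ)

/-- The translation operator `T_a f (x) = f (x - a)` on `L²(ℝ)`. -/
def Tr (a : ℝ) : L2 → L2 :=
  Lp.compMeasurePreserving (fun x => x - a) (measurePreserving_sub_right volume a)

end

theorem AddSubmonoid.neg_mem_of_isClosed {G : Type*} [AddGroup G] [TopologicalSpace G]
    [CompactSpace G] [IsTopologicalAddGroup G] {N : AddSubmonoid G} (hN : IsClosed (N : Set G))
    {x : G} (hx : x ∈ N) : -x ∈ N := by
  have hsub : (AddSubgroup.closure (N : Set G) : Set G) ⊆ N :=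
    calc (AddSubgroup.closure (N : Set G) : Set G)
        ⊆ _root_.closure (AddSubgroup.closure (N : Set G)) := _root_.subset_closure
      _ = _root_.closure (closure (N : Set G)) :=
          (closure_addSubmonoidClosure_eq_closure_addSubgroupClosure _).symm
      _ = N := by rw [closure_eq, hN.closure_eq]
  exact hsub (neg_mem (AddSubgroup.subset_closure hx))

theorem AddSubmonoid.neg_mem_of_isClosed_of_le {G : Type*} [AddCommGroup G] [TopologicalSpace G]
    [IsTopologicalAddGroup G] {H : AddSubgroup G} [CompactSpace (G ⧸ H)] {N : AddSubmonoid G}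
    (hHN : H.toAddSubmonoid ≤ N) (hN : IsClosed (N : Set G)) {x : G} (hx : x ∈ N) : -x ∈ N := by
  set π := QuotientAddGroup.mk' H
  have hsat : π ⁻¹' (N.map π) = N := by
    refine subset_antisymm ?_ fun y hy => ⟨y, hy, rfl⟩
    rintro y ⟨z, hz, hzy⟩
    have hzy : -z + y ∈ H := QuotientAddGroup.eq.mp hzy
    simpa using N.add_mem hz (hHN hzy)
  have hclosed : IsClosed (N.map π : Set (G ⧸ H)) := by
    rw [← (QuotientAddGroup.isQuotientMap_mk H).isClosed_preimage]
    exact hsat ▸ hN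
  have : π (-x) ∈ N.map π := (map_neg π x).symm ▸ neg_mem_of_isClosed hclosed ⟨x, hx, rfl⟩
  rwa [← SetLike.mem_coe, ← Set.mem_preimage, hsat] at this

lemma Tr_zero (f : L2) : Tr 0 f = f := by
  simp only [Tr, sub_zero]
  exact Lp.compMeasurePreserving_id_apply f

lemma Tr_add (a b : ℝ) (f : L2) : Tr (a + b) f = Tr a (Tr b f) := by
  rw [Tr, Tr, Tr, ← Lp.compMeasurePreserving_comp_apply]
  congr 2
  ext x
  simp only [Function.comp_apply]
  ring

lemma continuous_Tr (f : L2) : Continuous fun θ : ℝ => Tr θ f := by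
  have hshift : Continuous fun θ : ℝ => ContinuousMap.mk (fun x : ℝ => x - θ) (by fun_prop) :=
    ContinuousMap.continuous_of_continuous_uncurry _ (continuous_snd.sub continuous_fst)
  exact continuous_const.compMeasurePreservingLp hshift
    (fun θ => measurePreserving_sub_right volume θ) (by norm_num)

def invariantTranslations (S : Submodule ℂ L2) : AddSubmonoid ℝ where
  carrier := {θ | ∀ f ∈ S, Tr θ f ∈ S}
  zero_mem' f hf := by rwa [Tr_zero]
  add_mem' ha hb f hf := by rw [Tr_add]; exact ha _ (hb f hf)

lemma isClosed_invariantTranslations {S : Submodule ℂ L2} (hS : IsClosed (S : Set L2)) :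
    IsClosed (invariantTranslations S : Set ℝ) := by
  have : (invariantTranslations S : Set ℝ) = ⋂ f ∈ S, (fun θ => Tr θ f) ⁻¹' S := by
    ext θ
    simp [invariantTranslations]
  rw [this]
  exact isClosed_biInter fun f _ => hS.preimage (continuous_Tr f)

theorem stmt0 (S : Submodule ℂ L2) (hS : IsClosed (S : Set L2))
    (hinv : ∀ f ∈ S, ∀ k : ℤ, Tr (k : ℝ) f ∈ S) :
    ∃ M : AddSubgroup ℝ,
      (M : Set ℝ) = {θ : ℝ | ∀ f ∈ S, Tr θ f ∈ S} ∧
      IsClosed (M : Set ℝ) ∧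
      ∀ k : ℤ, (k : ℝ) ∈ M := by
  have hclosed := isClosed_invariantTranslations hS
  have hℤ : (AddSubgroup.zmultiples (1 : ℝ)).toAddSubmonoid ≤ invariantTranslations S := by
    rintro _ ⟨k, rfl⟩ f hf
    simpa using hinv f hf k
  refine ⟨{ invariantTranslations S with
      neg_mem' := (invariantTranslations S).neg_mem_of_isClosed_of_le hℤ hclosed },
    rfl, hclosed, fun k f hf => hinv f hf k⟩
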